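/- arXiv:math/9902143 — 3 statements merged into one kernel-verified Lean document; each statement's English description precedes it below -/
import Mathlib

section
/- In the quasipolynomial algebra \bar{J}^0_q(n), set X(1) = x_{1,1}x_{2,2}⋯x_{n,n} and, for j = 2,…,n, X(j) = x_{1,j}x_{2,j+1}⋯x_{n-j+1,n}·x_{n-j+1,1}x_{n-j+2,2}⋯x_{n,j}. Then for all s,t ∈ {1,…,n}: x_{s,t}X(1) = q^{(n-2)(n+1-s-t)} X(1) x_{s,t}, and x_{s,t}X(j) = q^{(n-1)(n+1-s-t)} X(j) x_{s,t} for every j = 2,…,n. Consequently, if q is a primitive m-th root of unity and r is the smallest positive integer with rm-n+1 ≥ 0, then the elements X(j)·x_{1,n}^{rm-n+1} for j = 2,…,n and X(1)·x_{1,n}^{rm-n+2} are central in \bar{J}^0_q(n). -/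
noncomputable section

/-- The defining relations of the quasipolynomial algebra `\bar J^0_q(n)`:
`x_{i,j} x_{s,t} = q^{s+t-i-j} x_{s,t} x_{i,j}` whenever `(s-i)(t-j) ≤ 0`, and
`x_{i,j} x_{s,t} = q^{s+t-i-j-2} x_{s,t} x_{i,j}` whenever `s > i` and `t > j`.
(Indices here are 0-based; all index differences agree with the 1-based ones.) -/
inductive QRel (n : ℕ) (q : ℂ) :
    FreeAlgebra ℂ (Fin n × Fin n) → FreeAlgebra ℂ (Fin n × Fin n) → Prop
  | comm (i j s t : Fin n)
      (h : (((s : ℕ) : ℤ) - ((i : ℕ) : ℤ)) * (((t : ℕ) : ℤ) - ((j : ℕ) : ℤ)) ≤ 0) :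
      QRel n q (FreeAlgebra.ι ℂ (i, j) * FreeAlgebra.ι ℂ (s, t))
        (q ^ (((s : ℕ) : ℤ) + ((t : ℕ) : ℤ) - ((i : ℕ) : ℤ) - ((j : ℕ) : ℤ)) •
          (FreeAlgebra.ι ℂ (s, t) * FreeAlgebra.ι ℂ (i, j)))
  | cross (i j s t : Fin n) (hs : i < s) (ht : j < t) :
      QRel n q (FreeAlgebra.ι ℂ (i, j) * FreeAlgebra.ι ℂ (s, t))
        (q ^ (((s : ℕ) : ℤ) + ((t : ℕ) : ℤ) - ((i : ℕ) : ℤ) - ((j : ℕ) : ℤ) - 2) •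
          (FreeAlgebra.ι ℂ (s, t) * FreeAlgebra.ι ℂ (i, j)))

/-- The quasipolynomial algebra `\bar J^0_q(n)`. -/
abbrev QAlg (n : ℕ) (q : ℂ) := RingQuot (QRel n q)

/-- The generator `x_{i,j}` (0-based indices). -/
def qgen (n : ℕ) (q : ℂ) (i j : Fin n) : QAlg n q :=
  RingQuot.mkAlgHom ℂ (QRel n q) (FreeAlgebra.ι ℂ (i, j))

/-- The generator `x_{i,j}` with `ℕ` (0-based) indices; junk value `1` out of range. -/
def qgen' (n : ℕ) (q : ℂ) (i j : ℕ) : QAlg n q :=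
  if h : i < n ∧ j < n then qgen n q ⟨i, h.1⟩ ⟨j, h.2⟩ else 1

/-- `X(j)` (for the 1-based index `j`): `X(1) = x_{1,1} x_{2,2} ⋯ x_{n,n}` and, for `j ≥ 2`,
`X(j) = x_{1,j} x_{2,j+1} ⋯ x_{n-j+1,n} ⋅ x_{n-j+1,1} x_{n-j+2,2} ⋯ x_{n,j}`. -/
def XX (n : ℕ) (q : ℂ) (j : ℕ) : QAlg n q :=
  if j = 1 then ((List.range n).map fun k => qgen' n q k k).prod
  else ((List.range (n - j + 1)).map fun k => qgen' n q k (j - 1 + k)).prod *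
    ((List.range j).map fun k => qgen' n q (n - j + k) k).prod

/-!
Every generator `x_{s,t}` `q`-commutes with every generator `x_{i,j}`, with an exponent that is
`i + j - s - t`, corrected by `+2` when `(i, j)` lies strictly north-west and by `-2` when it lies
strictly south-east of `(s, t)`. Hence `x_{s,t}` `q`-commutes with any monomial, the exponent being
the sum of the pairwise ones. Along a diagonal run of generators this sum is a quadratic in the run
length plus twice the number of entries north-west minus twice the number south-east of `(s, t)`;
for `X(1)` and for the two runs making up `X(j)` it collapses to `(n - 2)(n + 1 - s - t)` and
`(n - 1)(n + 1 - s - t)`. The corner `x_{1,n}` contributes `n + 1 - s - t` per factor, so the chosen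
powers raise the total exponent to `r m (n + 1 - s - t)`, a multiple of `m`: the products commute
with all generators, hence are central.
-/

section

variable {K A : Type*} [Field K] [Semiring A] [Algebra K A]

def QCommute (q : K) (e : ℤ) (a b : A) : Prop :=
  a * b = q ^ e • (b * a)

namespace QCommute

variable {q : K} {a b c : A} {e f : ℤ}

theorem one_right (q : K) (a : A) : QCommute q 0 a 1 := by
  simp [QCommute]

theorem mul_right (hq : q ≠ 0) (hb : QCommute q e a b) (hc : QCommute q f a c) :
    QCommute q (e + f) a (b * c) := by
  unfold QCommute at *
  rw [← mul_assoc, hb, smul_mul_assoc, mul_assoc, hc, mul_smul_comm, smul_smul, ← zpow_add₀ hq,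
    mul_assoc]

theorem list_prod_right {ι : Type*} (hq : q ≠ 0) (l : List ι) (g : ι → A) (w : ι → ℤ)
    (h : ∀ i ∈ l, QCommute q (w i) a (g i)) : QCommute q (l.map w).sum a (l.map g).prod := by
  induction l with
  | nil => exact one_right q a
  | cons i l ih =>
    simp only [List.map_cons, List.sum_cons, List.prod_cons]
    exact mul_right hq (h i List.mem_cons_self) (ih fun k hk => h k (List.mem_cons_of_mem i hk))

theorem pow_right (hq : q ≠ 0) (h : QCommute q e a b) (k : ℕ) : QCommute q (k * e) a (b ^ k) := by
  induction k with
  | zero => simpa using one_right q a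
  | succ k ih =>
    rw [pow_succ]
    convert mul_right hq ih h using 1
    push_cast
    ring

theorem symm (hq : q ≠ 0) (h : QCommute q e a b) : QCommute q (-e) b a := by
  unfold QCommute at *
  rw [h, smul_smul, ← zpow_add₀ hq, neg_add_cancel, zpow_zero, one_smul]

theorem commute (h : QCommute q e a b) (he : q ^ e = 1) : Commute a b := by
  rw [QCommute, he, one_smul] at h
  exact h

end QCommute

end

theorem RingQuot.mem_center_of_forall_commute_ι {R X : Type*} [CommSemiring R]
    {r : FreeAlgebra R X → FreeAlgebra R X → Prop} {a : RingQuot r}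
    (h : ∀ x, Commute (RingQuot.mkAlgHom R r (FreeAlgebra.ι R x)) a) :
    a ∈ Subalgebra.center R (RingQuot r) := by
  rw [Subalgebra.mem_center_iff]
  intro b
  obtain ⟨c, rfl⟩ := RingQuot.mkAlgHom_surjective R r b
  have hc : RingQuot.mkAlgHom R r c ∈
      Algebra.adjoin R (RingQuot.mkAlgHom R r '' Set.range (FreeAlgebra.ι R)) := by
    rw [← AlgHom.map_adjoin, FreeAlgebra.adjoin_range_ι]
    exact Subalgebra.mem_map.mpr ⟨c, trivial, rfl⟩
  refine (Algebra.commute_of_mem_adjoin_of_forall_mem_commute hc ?_).eq.symm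
  rintro _ ⟨_, ⟨x, rfl⟩, rfl⟩
  exact (h x).symm

def qexp (s t i j : ℕ) : ℤ :=
  (i : ℤ) + j - s - t + (if i < s ∧ j < t then 2 else 0) - (if s < i ∧ t < j then 2 else 0)

-- The two clamped terms count the `k < m` with `(α + k, β + k)` strictly north-west,
-- resp. strictly south-east, of `(s, t)`.
theorem sum_qexp_diagonal (s t α β m : ℕ) :
    ((List.range m).map fun k => qexp s t (α + k) (β + k)).sum =
      (m : ℤ) * ((α : ℤ) + β - s - t + m - 1)
        + 2 * max 0 (min (m : ℤ) (min ((s : ℤ) - α) ((t : ℤ) - β)))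
        - 2 * max 0 (min (m : ℤ) (m - 1 - max ((s : ℤ) - α) ((t : ℤ) - β))) := by
  induction m with
  | zero => simp
  | succ m ih =>
    rw [List.range_succ, List.map_append, List.sum_append, ih]
    simp only [List.map_cons, List.map_nil, List.sum_cons, List.sum_nil, add_zero, qexp]
    push_cast
    have hstep : ((m : ℤ) + 1) * ((α : ℤ) + β - s - t + (m + 1) - 1)
        = m * ((α : ℤ) + β - s - t + m - 1) + (α + β - s - t) + 2 * m := by ring
    rw [hstep]
    generalize (m : ℤ) * ((α : ℤ) + β - s - t + m - 1) = P
    split_ifs <;> omega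

section QAlg

variable {n : ℕ} {q : ℂ}

theorem qcommute_qgen_of_qrel {i j s t : Fin n} {e : ℤ}
    (h : QRel n q (FreeAlgebra.ι ℂ (i, j) * FreeAlgebra.ι ℂ (s, t))
      (q ^ e • (FreeAlgebra.ι ℂ (s, t) * FreeAlgebra.ι ℂ (i, j)))) :
    QCommute q e (qgen n q i j) (qgen n q s t) := by
  have h' := RingQuot.mkAlgHom_rel ℂ h
  simp only [map_mul, map_smul] at h'
  exact h'

theorem qcommute_qgen (hq : q ≠ 0) (s t i j : Fin n) :
    QCommute q (qexp s t i j) (qgen n q s t) (qgen n q i j) := by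
  by_cases hlt : s < i ∧ t < j
  · convert qcommute_qgen_of_qrel (QRel.cross s t i j hlt.1 hlt.2) using 2
    simp only [qexp, Fin.lt_def] at hlt ⊢
    split_ifs <;> omega
  by_cases hgt : i < s ∧ j < t
  · convert (qcommute_qgen_of_qrel (QRel.cross i j s t hgt.1 hgt.2)).symm hq using 2
    simp only [qexp, Fin.lt_def] at hgt ⊢
    split_ifs <;> omega
  have hsign : (((i : ℕ) : ℤ) - s) * (((j : ℕ) : ℤ) - t) ≤ 0 := by
    simp only [Fin.lt_def] at hlt hgt
    rw [mul_nonpos_iff]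
    omega
  convert qcommute_qgen_of_qrel (QRel.comm s t i j hsign) using 2
  simp only [qexp, Fin.lt_def] at hlt hgt ⊢
  rw [if_neg hgt, if_neg hlt]
  ring

theorem qcommute_qgen_qgen' (hq : q ≠ 0) (s t : Fin n) {i j : ℕ} (hi : i < n) (hj : j < n) :
    QCommute q (qexp s t i j) (qgen n q s t) (qgen' n q i j) := by
  rw [qgen', dif_pos ⟨hi, hj⟩]
  exact qcommute_qgen hq s t ⟨i, hi⟩ ⟨j, hj⟩

theorem qcommute_qgen_diagonal_prod (hq : q ≠ 0) (s t : Fin n) {α β m : ℕ}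
    (hα : α + m ≤ n) (hβ : β + m ≤ n) :
    QCommute q ((List.range m).map fun k => qexp s t (α + k) (β + k)).sum (qgen n q s t)
      ((List.range m).map fun k => qgen' n q (α + k) (β + k)).prod :=
  QCommute.list_prod_right hq _ _ _ fun k hk => by
    rw [List.mem_range] at hk
    exact qcommute_qgen_qgen' hq s t (by omega) (by omega)

theorem qcommute_qgen_XX_one (hq : q ≠ 0) (s t : Fin n) :
    QCommute q (((n : ℤ) - 2) * ((n : ℤ) - 1 - ((s : ℕ) : ℤ) - ((t : ℕ) : ℤ)))
      (qgen n q s t) (XX n q 1) := by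
  have h := qcommute_qgen_diagonal_prod hq s t (α := 0) (β := 0) (m := n) (by omega) (by omega)
  rw [sum_qexp_diagonal] at h
  simp only [zero_add] at h
  rw [XX, if_pos rfl]
  convert h using 1
  have hs := s.isLt
  have ht := t.isLt
  have hnorthwest : max 0 (min (n : ℤ) (min ((s : ℤ) - (0 : ℕ)) ((t : ℤ) - (0 : ℕ))))
      = min (s : ℤ) t := by omega
  have hsoutheast : max 0 (min (n : ℤ) (n - 1 - max ((s : ℤ) - (0 : ℕ)) ((t : ℤ) - (0 : ℕ))))
      = n - 1 - max (s : ℤ) t := by omega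
  rw [hnorthwest, hsoutheast]
  linear_combination (-2) * min_add_max (s : ℤ) t

theorem qcommute_qgen_XX (hq : q ≠ 0) {j : ℕ} (hj2 : 2 ≤ j) (hjn : j ≤ n) (s t : Fin n) :
    QCommute q (((n : ℤ) - 1) * ((n : ℤ) - 1 - ((s : ℕ) : ℤ) - ((t : ℕ) : ℤ)))
      (qgen n q s t) (XX n q j) := by
  have hupper := qcommute_qgen_diagonal_prod hq s t (α := 0) (β := j - 1) (m := n - j + 1)
    (by omega) (by omega)
  have hlower := qcommute_qgen_diagonal_prod hq s t (α := n - j) (β := 0) (m := j)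
    (by omega) (by omega)
  rw [sum_qexp_diagonal] at hupper hlower
  simp only [zero_add] at hupper hlower
  rw [XX, if_neg (by omega)]
  convert hupper.mul_right hq hlower using 1
  have hs := s.isLt
  have ht := t.isLt
  push_cast [Nat.cast_sub (by omega : 1 ≤ j), Nat.cast_sub hjn]
  simp only [sub_zero, add_zero, zero_add]
  have hclamp : max 0 (min ((n : ℤ) - j + 1) (n - j + 1 - 1 - max (s : ℤ) (t - (j - 1))))
      + max 0 (min (j : ℤ) (j - 1 - max ((s : ℤ) - (n - j)) t))
      - max 0 (min ((n : ℤ) - j + 1) (min (s : ℤ) (t - (j - 1))))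
      - max 0 (min (j : ℤ) (min ((s : ℤ) - (n - j)) t)) = n - 1 - s - t := by
    omega
  linear_combination 2 * hclamp

theorem qcommute_qgen_corner_pow (hq : q ≠ 0) (s t : Fin n) (e : ℕ) :
    QCommute q (e * ((n : ℤ) - 1 - s - t)) (qgen n q s t) (qgen' n q 0 (n - 1) ^ e) := by
  have hs := s.isLt
  have ht := t.isLt
  have hcorner := qcommute_qgen_qgen' (q := q) hq s t (i := 0) (j := n - 1) (by omega) (by omega)
  have hexp : qexp s t 0 (n - 1) = (n : ℤ) - 1 - s - t := by
    rw [qexp, if_neg (by omega), if_neg (by omega)]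
    omega
  rw [hexp] at hcorner
  exact hcorner.pow_right hq e

theorem mul_corner_pow_mem_center (hq : q ≠ 0) {m : ℕ} (hm : IsPrimitiveRoot q m)
    {a : QAlg n q} {d : ℤ} {e : ℕ}
    (ha : ∀ s t : Fin n, QCommute q (d * ((n : ℤ) - 1 - ((s : ℕ) : ℤ) - ((t : ℕ) : ℤ)))
      (qgen n q s t) a)
    (hde : (m : ℤ) ∣ d + e) :
    a * qgen' n q 0 (n - 1) ^ e ∈ Subalgebra.center ℂ (QAlg n q) := by
  refine RingQuot.mem_center_of_forall_commute_ι fun ⟨s, t⟩ => ?_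
  refine ((ha s t).mul_right hq (qcommute_qgen_corner_pow hq s t e)).commute ?_
  rw [hm.zpow_eq_one_iff_dvd, ← add_mul]
  exact hde.mul_right _

end QAlg

theorem stmt3 (n : ℕ) (q : ℂ) (hq : q ≠ 0) :
    (∀ s t : Fin n,
        qgen n q s t * XX n q 1 =
          q ^ (((n : ℤ) - 2) * ((n : ℤ) - 1 - ((s : ℕ) : ℤ) - ((t : ℕ) : ℤ))) •
            (XX n q 1 * qgen n q s t)) ∧
    (∀ j : ℕ, 2 ≤ j → j ≤ n → ∀ s t : Fin n,
        qgen n q s t * XX n q j =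
          q ^ (((n : ℤ) - 1) * ((n : ℤ) - 1 - ((s : ℕ) : ℤ) - ((t : ℕ) : ℤ))) •
            (XX n q j * qgen n q s t)) ∧
    (∀ m : ℕ, 0 < m → IsPrimitiveRoot q m →
      ∀ r : ℕ, 0 < r → n ≤ r * m + 1 → (∀ r' : ℕ, 0 < r' → n ≤ r' * m + 1 → r ≤ r') →
        (∀ j : ℕ, 2 ≤ j → j ≤ n →
            XX n q j * qgen' n q 0 (n - 1) ^ (r * m + 1 - n) ∈
              Subalgebra.center ℂ (QAlg n q)) ∧
          XX n q 1 * qgen' n q 0 (n - 1) ^ (r * m + 2 - n) ∈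
            Subalgebra.center ℂ (QAlg n q)) := by
  refine ⟨qcommute_qgen_XX_one hq, fun j hj2 hjn => qcommute_qgen_XX hq hj2 hjn, ?_⟩
  intro m _ hm r _ hn _
  refine ⟨fun j hj2 hjn => mul_corner_pow_mem_center hq hm (qcommute_qgen_XX hq hj2 hjn) ⟨r, ?_⟩,
    mul_corner_pow_mem_center hq hm (qcommute_qgen_XX_one hq) ⟨r, ?_⟩⟩
  · rw [Nat.cast_sub hn]
    push_cast
    ring
  · rw [Nat.cast_sub (by omega)]
    push_cast
    ring
end
end

section
/- Let n ≥ 2 and let M be the n²×n² skew-symmetric integer matrix with rows and columns indexed by pairs [i,j], 1 ≤ i,j ≤ n, in lexicographic order, whose entry h_{[i,j],[s,t]} equals -2 if i < s and j < t, equals 2 if i > s and j > t, and equals 0 otherwise. Then the rank of M (over ℚ) equals n² - n. -/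
open Matrix

open Finset

noncomputable section

/-- The exponent `h_{[i,j],[s,t]}` of the quasipolynomial algebra associated to `J^z_q(n)`:
`-2` if `i < s` and `j < t`, `2` if `i > s` and `j > t`, and `0` otherwise. -/
def hz (i j s t : ℕ) : ℤ :=
  if i < s ∧ j < t then -2 else if s < i ∧ t < j then 2 else 0

/-- The defining matrix of the quasipolynomial algebra of `J^z_q(n)`: the pair `[i,j]`
(0-based) is encoded as the index `i·n + j`, realizing the lexicographic order. -/
def Mz (n : ℕ) : Matrix (Fin (n ^ 2)) (Fin (n ^ 2)) ℤ :=
  Matrix.of fun a b =>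
    hz ((a : ℕ) / n) ((a : ℕ) % n) ((b : ℕ) / n) ((b : ℕ) % n)

namespace Stmt5
variable {n : ℕ}

def idx (hn : 0 < n) (i j : ℕ) : Fin (n ^ 2) :=
  ⟨(i % n) * n + j % n, by
    have h1 := Nat.mod_lt i hn
    have h2 := Nat.mod_lt j hn
    have : (i % n) * n + j % n < n * n := by nlinarith
    simpa [pow_two] using this⟩

lemma idx_val (hn : 0 < n) (i j : ℕ) (hi : i < n) (hj : j < n) :
    ((idx hn i j : ℕ)) = i * n + j := by
  simp [idx, Nat.mod_eq_of_lt hi, Nat.mod_eq_of_lt hj]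

lemma idx_div (hn : 0 < n) (i j : ℕ) (hi : i < n) (hj : j < n) :
    ((idx hn i j : ℕ)) / n = i := by
  rw [idx_val hn i j hi hj, Nat.add_comm, Nat.add_mul_div_right _ _ hn,
    Nat.div_eq_of_lt hj, Nat.zero_add]

lemma idx_mod (hn : 0 < n) (i j : ℕ) (hi : i < n) (hj : j < n) :
    ((idx hn i j : ℕ)) % n = j := by
  rw [idx_val hn i j hi hj, Nat.add_comm, Nat.add_mul_mod_self_right, Nat.mod_eq_of_lt hj]

lemma sum_pairs (hn : 0 < n) (g : Fin (n ^ 2) → ℚ) :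
    ∑ b : Fin (n ^ 2), g b = ∑ s ∈ range n, ∑ t ∈ range n, g (idx hn s t) := by
  rw [← Finset.sum_product']
  refine (Finset.sum_nbij' (fun p => idx hn p.1 p.2)
    (fun b => (((b : ℕ)) / n, ((b : ℕ)) % n)) ?_ ?_ ?_ ?_ ?_).symm
  · intro p hp; exact Finset.mem_univ _
  · intro b _
    simp only [Finset.mem_product, Finset.mem_range]
    have hb := b.2
    constructor
    · apply Nat.div_lt_of_lt_mul; simpa [pow_two] using hb
    · exact Nat.mod_lt _ hn
  · intro p hp
    simp only [Finset.mem_product, Finset.mem_range] at hp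
    simp [idx_div hn _ _ hp.1 hp.2, idx_mod hn _ _ hp.1 hp.2]
  · intro b _
    ext
    have hb : ((b:ℕ)) / n < n := by
      apply Nat.div_lt_of_lt_mul; simpa [pow_two] using b.2
    rw [idx_val hn _ _ hb (Nat.mod_lt _ hn)]
    rw [Nat.mul_comm]; exact Nat.div_add_mod _ n
  · intro p hp; rfl

def U (hn : 0 < n) (v : Fin (n ^ 2) → ℚ) (i j : ℕ) : ℚ := v (idx hn i j)

def E (hn : 0 < n) (v : Fin (n ^ 2) → ℚ) (i j : ℕ) : ℚ :=
  ∑ s ∈ range n, ∑ t ∈ range n, ((hz i j s t : ℤ) : ℚ) * U hn v s t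

lemma E_eq (hn : 0 < n) (v : Fin (n ^ 2) → ℚ) (i j : ℕ) (hi : i < n) (hj : j < n) :
    ((Mz n).map ((↑) : ℤ → ℚ)).mulVec v (idx hn i j) = E hn v i j := by
  unfold E U
  rw [mulVec, dotProduct, sum_pairs hn]
  refine Finset.sum_congr rfl fun s hs => Finset.sum_congr rfl fun t ht => ?_
  simp only [mem_range] at hs ht
  simp only [Matrix.map_apply, Mz, Matrix.of_apply,
    idx_div hn i j hi hj, idx_mod hn i j hi hj,
    idx_div hn s t hs ht, idx_mod hn s t hs ht]


/-! ### Pointwise difference identities for `hz` -/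

lemma hz_dd (i j s t : ℕ) :
    hz i j s t - hz i (j+1) s t - hz (i+1) j s t + hz (i+1) (j+1) s t
      = (if s = i ∧ t = j then 2 else 0) - (if s = i+1 ∧ t = j+1 then 2 else 0) := by
  simp only [hz]; split_ifs <;> omega

lemma hz_d2 (j s t : ℕ) (hs : s < n) :
    hz (n-1) j s t - hz (n-1) (j+1) s t = if s < n-1 ∧ t = j then -2 else 0 := by
  simp only [hz]; split_ifs <;> omega

lemma hz_d3 (i s t : ℕ) (ht : t < n) :
    hz i (n-1) s t - hz (i+1) (n-1) s t = if s = i ∧ t < n-1 then -2 else 0 := by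
  simp only [hz]; split_ifs <;> omega

lemma hz_base (s t : ℕ) (hs : s < n) (ht : t < n) :
    hz (n-1) (n-1) s t = if s < n-1 ∧ t < n-1 then 2 else 0 := by
  simp only [hz]; split_ifs <;> omega

/-! ### Sum helpers -/

lemma sum_ite_lt (m : ℕ) (h : m ≤ n) (f : ℕ → ℚ) :
    ∑ t ∈ range n, (if t < m then f t else 0) = ∑ t ∈ range m, f t := by
  rw [← Finset.sum_filter]
  congr 1
  ext x; simp; omega

lemma sum_ite_eq_range (j : ℕ) (hj : j < n) (f : ℕ → ℚ) :
    ∑ t ∈ range n, (if t = j then f t else 0) = f j := by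
  rw [Finset.sum_ite_eq' (range n) j f, if_pos (mem_range.2 hj)]

lemma sum_delta (c : ℚ) (i j : ℕ) (hi : i < n) (hj : j < n) (f : ℕ → ℕ → ℚ) :
    ∑ s ∈ range n, ∑ t ∈ range n, (if s = i ∧ t = j then c else 0) * f s t = c * f i j := by
  have h1 : ∀ s ∈ range n, ∑ t ∈ range n, (if s = i ∧ t = j then c else 0) * f s t
      = if s = i then c * f s j else 0 := by
    intro s _
    rw [show (fun t => (if s = i ∧ t = j then c else 0) * f s t)
        = fun t => (if s = i then (if t = j then c * f s t else 0) else 0) from ?_]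
    · split_ifs with h
      · exact sum_ite_eq_range j hj _
      · simp
    · funext t; split_ifs <;> simp_all
  rw [Finset.sum_congr rfl h1, sum_ite_eq_range i hi]

lemma sum_col (c : ℚ) (j : ℕ) (hj : j < n) (f : ℕ → ℕ → ℚ) :
    ∑ s ∈ range n, ∑ t ∈ range n, (if s < n-1 ∧ t = j then c else 0) * f s t
      = c * ∑ s ∈ range (n-1), f s j := by
  have h1 : ∀ s ∈ range n, ∑ t ∈ range n, (if s < n-1 ∧ t = j then c else 0) * f s t
      = if s < n-1 then c * f s j else 0 := by
    intro s _
    rw [show (fun t => (if s < n-1 ∧ t = j then c else 0) * f s t)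
        = fun t => (if s < n-1 then (if t = j then c * f s t else 0) else 0) from ?_]
    · split_ifs with h
      · exact sum_ite_eq_range j hj _
      · simp
    · funext t; split_ifs <;> simp_all
  rw [Finset.sum_congr rfl h1, sum_ite_lt (n-1) (by omega) _, Finset.mul_sum]

lemma sum_row (c : ℚ) (i : ℕ) (hi : i < n) (f : ℕ → ℕ → ℚ) :
    ∑ s ∈ range n, ∑ t ∈ range n, (if s = i ∧ t < n-1 then c else 0) * f s t
      = c * ∑ t ∈ range (n-1), f i t := by
  have h1 : ∀ s ∈ range n, ∑ t ∈ range n, (if s = i ∧ t < n-1 then c else 0) * f s t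
      = if s = i then c * ∑ t ∈ range (n-1), f s t else 0 := by
    intro s _
    rw [show (fun t => (if s = i ∧ t < n-1 then c else 0) * f s t)
        = fun t => (if s = i then (if t < n-1 then c * f s t else 0) else 0) from ?_]
    · split_ifs with h
      · rw [sum_ite_lt (n-1) (by omega) _, Finset.mul_sum]
      · simp
    · funext t; split_ifs <;> simp_all
  rw [Finset.sum_congr rfl h1, sum_ite_eq_range i hi]

lemma sum_block (c : ℚ) (f : ℕ → ℕ → ℚ) :
    ∑ s ∈ range n, ∑ t ∈ range n, (if s < n-1 ∧ t < n-1 then c else 0) * f s t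
      = c * ∑ s ∈ range (n-1), ∑ t ∈ range (n-1), f s t := by
  have h1 : ∀ s ∈ range n, ∑ t ∈ range n, (if s < n-1 ∧ t < n-1 then c else 0) * f s t
      = if s < n-1 then c * ∑ t ∈ range (n-1), f s t else 0 := by
    intro s _
    rw [show (fun t => (if s < n-1 ∧ t < n-1 then c else 0) * f s t)
        = fun t => (if s < n-1 then (if t < n-1 then c * f s t else 0) else 0) from ?_]
    · split_ifs with h
      · rw [sum_ite_lt (n-1) (by omega) _, Finset.mul_sum]
      · simp
    · funext t; split_ifs <;> simp_all
  rw [Finset.sum_congr rfl h1, sum_ite_lt (n-1) (by omega) _, Finset.mul_sum]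

lemma sum2_comb (f g h k : ℕ → ℕ → ℚ) :
    ((∑ s ∈ range n, ∑ t ∈ range n, f s t) - (∑ s ∈ range n, ∑ t ∈ range n, g s t))
      - (∑ s ∈ range n, ∑ t ∈ range n, h s t) + (∑ s ∈ range n, ∑ t ∈ range n, k s t)
      = ∑ s ∈ range n, ∑ t ∈ range n, (f s t - g s t - h s t + k s t) := by
  simp [Finset.sum_sub_distrib, Finset.sum_add_distrib]

lemma sum2_sub (f g : ℕ → ℕ → ℚ) :
    ((∑ s ∈ range n, ∑ t ∈ range n, f s t) - (∑ s ∈ range n, ∑ t ∈ range n, g s t))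
      = ∑ s ∈ range n, ∑ t ∈ range n, (f s t - g s t) := by
  simp [Finset.sum_sub_distrib]

/-! ### Combination identities for `E` -/

lemma Ecomb1 (hn : 0 < n) (v : Fin (n ^ 2) → ℚ) (i j : ℕ) (hi : i + 1 < n) (hj : j + 1 < n) :
    E hn v i j - E hn v i (j+1) - E hn v (i+1) j + E hn v (i+1) (j+1)
      = 2 * U hn v i j - 2 * U hn v (i+1) (j+1) := by
  unfold E
  rw [sum2_comb]
  have hpt : ∀ s ∈ range n, ∀ t ∈ range n,
      ((hz i j s t : ℤ) : ℚ) * U hn v s t - ((hz i (j+1) s t : ℤ) : ℚ) * U hn v s t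
        - ((hz (i+1) j s t : ℤ) : ℚ) * U hn v s t + ((hz (i+1) (j+1) s t : ℤ) : ℚ) * U hn v s t
      = (if s = i ∧ t = j then (2:ℚ) else 0) * U hn v s t
        - (if s = i+1 ∧ t = j+1 then (2:ℚ) else 0) * U hn v s t := by
    intro s _ t _
    have h2 : (((hz i j s t - hz i (j+1) s t - hz (i+1) j s t + hz (i+1) (j+1) s t : ℤ)) : ℚ)
        = (if s = i ∧ t = j then (2:ℚ) else 0) - (if s = i+1 ∧ t = j+1 then (2:ℚ) else 0) := by
      rw [hz_dd]; push_cast [apply_ite ((↑) : ℤ → ℚ)]; ring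
    push_cast at h2 ⊢
    linear_combination h2 * U hn v s t
  rw [Finset.sum_congr rfl fun s hs => Finset.sum_congr rfl fun t ht => hpt s hs t ht,
    ← sum2_sub, sum_delta 2 i j (by omega) (by omega), sum_delta 2 (i+1) (j+1) hi hj]

lemma Ecomb2 (hn : 0 < n) (v : Fin (n ^ 2) → ℚ) (j : ℕ) (hj : j + 1 < n) :
    E hn v (n-1) j - E hn v (n-1) (j+1) = -2 * ∑ s ∈ range (n-1), U hn v s j := by
  unfold E
  rw [sum2_sub]
  have hpt : ∀ s ∈ range n, ∀ t ∈ range n,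
      ((hz (n-1) j s t : ℤ) : ℚ) * U hn v s t - ((hz (n-1) (j+1) s t : ℤ) : ℚ) * U hn v s t
      = (if s < n-1 ∧ t = j then (-2:ℚ) else 0) * U hn v s t := by
    intro s hs t _
    simp only [mem_range] at hs
    have h2 : (((hz (n-1) j s t - hz (n-1) (j+1) s t : ℤ)) : ℚ)
        = (if s < n-1 ∧ t = j then (-2:ℚ) else 0) := by
      rw [hz_d2 j s t hs]; push_cast [apply_ite ((↑) : ℤ → ℚ)]; ring
    push_cast at h2 ⊢
    linear_combination h2 * U hn v s t
  rw [Finset.sum_congr rfl fun s hs => Finset.sum_congr rfl fun t ht => hpt s hs t ht,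
    sum_col (-2) j (by omega)]

lemma Ecomb3 (hn : 0 < n) (v : Fin (n ^ 2) → ℚ) (i : ℕ) (hi : i + 1 < n) :
    E hn v i (n-1) - E hn v (i+1) (n-1) = -2 * ∑ t ∈ range (n-1), U hn v i t := by
  unfold E
  rw [sum2_sub]
  have hpt : ∀ s ∈ range n, ∀ t ∈ range n,
      ((hz i (n-1) s t : ℤ) : ℚ) * U hn v s t - ((hz (i+1) (n-1) s t : ℤ) : ℚ) * U hn v s t
      = (if s = i ∧ t < n-1 then (-2:ℚ) else 0) * U hn v s t := by
    intro s _ t ht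
    simp only [mem_range] at ht
    have h2 : (((hz i (n-1) s t - hz (i+1) (n-1) s t : ℤ)) : ℚ)
        = (if s = i ∧ t < n-1 then (-2:ℚ) else 0) := by
      rw [hz_d3 i s t ht]; push_cast [apply_ite ((↑) : ℤ → ℚ)]; ring
    push_cast at h2 ⊢
    linear_combination h2 * U hn v s t
  rw [Finset.sum_congr rfl fun s hs => Finset.sum_congr rfl fun t ht => hpt s hs t ht,
    sum_row (-2) i (by omega)]

lemma Ebase (hn : 0 < n) (v : Fin (n ^ 2) → ℚ) :
    E hn v (n-1) (n-1) = 2 * ∑ s ∈ range (n-1), ∑ t ∈ range (n-1), U hn v s t := by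
  unfold E
  have hpt : ∀ s ∈ range n, ∀ t ∈ range n,
      ((hz (n-1) (n-1) s t : ℤ) : ℚ) * U hn v s t
      = (if s < n-1 ∧ t < n-1 then (2:ℚ) else 0) * U hn v s t := by
    intro s hs t ht
    simp only [mem_range] at hs ht
    have h2 : ((hz (n-1) (n-1) s t : ℤ) : ℚ) = (if s < n-1 ∧ t < n-1 then (2:ℚ) else 0) := by
      rw [hz_base s t hs ht]; push_cast [apply_ite ((↑) : ℤ → ℚ)]; ring
    rw [h2]
  rw [Finset.sum_congr rfl fun s hs => Finset.sum_congr rfl fun t ht => hpt s hs t ht,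
    sum_block 2]


/-! ### From `M v = 0` to the relations, and back -/

lemma E_zero_of_mulVec (hn : 0 < n) (v : Fin (n ^ 2) → ℚ)
    (hv : ((Mz n).map ((↑) : ℤ → ℚ)).mulVec v = 0) (i j : ℕ) (hi : i < n) (hj : j < n) :
    E hn v i j = 0 := by
  rw [← E_eq hn v i j hi hj]
  exact congrFun hv _

lemma rel1_of_mulVec (hn : 0 < n) (v : Fin (n ^ 2) → ℚ)
    (hv : ((Mz n).map ((↑) : ℤ → ℚ)).mulVec v = 0) (i j : ℕ) (hi : i + 1 < n) (hj : j + 1 < n) :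
    U hn v i j = U hn v (i+1) (j+1) := by
  have h := Ecomb1 hn v i j hi hj
  rw [E_zero_of_mulVec hn v hv i j (by omega) (by omega),
    E_zero_of_mulVec hn v hv i (j+1) (by omega) hj,
    E_zero_of_mulVec hn v hv (i+1) j hi (by omega),
    E_zero_of_mulVec hn v hv (i+1) (j+1) hi hj] at h
  linarith

lemma rel2_of_mulVec (hn : 0 < n) (v : Fin (n ^ 2) → ℚ)
    (hv : ((Mz n).map ((↑) : ℤ → ℚ)).mulVec v = 0) (j : ℕ) (hj : j + 1 < n) :
    ∑ s ∈ range (n-1), U hn v s j = 0 := by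
  have h := Ecomb2 hn v j hj
  rw [E_zero_of_mulVec hn v hv (n-1) j (by omega) (by omega),
    E_zero_of_mulVec hn v hv (n-1) (j+1) (by omega) hj] at h
  linarith

lemma rel3_of_mulVec (hn : 0 < n) (v : Fin (n ^ 2) → ℚ)
    (hv : ((Mz n).map ((↑) : ℤ → ℚ)).mulVec v = 0) (i : ℕ) (hi : i + 1 < n) :
    ∑ t ∈ range (n-1), U hn v i t = 0 := by
  have h := Ecomb3 hn v i hi
  rw [E_zero_of_mulVec hn v hv i (n-1) (by omega) (by omega),
    E_zero_of_mulVec hn v hv (i+1) (n-1) hi (by omega)] at h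
  linarith

/-- The relations on `U` determined by the kernel. -/
def Rel (hn : 0 < n) (v : Fin (n ^ 2) → ℚ) : Prop :=
  (∀ i j, i + 1 < n → j + 1 < n → U hn v i j = U hn v (i+1) (j+1)) ∧
  (∀ j, j + 1 < n → ∑ s ∈ range (n-1), U hn v s j = 0) ∧
  (∀ i, i + 1 < n → ∑ t ∈ range (n-1), U hn v i t = 0)

lemma rel_of_mulVec (hn : 0 < n) (v : Fin (n ^ 2) → ℚ)
    (hv : ((Mz n).map ((↑) : ℤ → ℚ)).mulVec v = 0) : Rel hn v :=
  ⟨fun i j hi hj => rel1_of_mulVec hn v hv i j hi hj,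
   fun j hj => rel2_of_mulVec hn v hv j hj,
   fun i hi => rel3_of_mulVec hn v hv i hi⟩

lemma E_zero_of_rel (hn : 0 < n) (v : Fin (n ^ 2) → ℚ) (hr : Rel hn v) :
    ∀ i j, i < n → j < n → E hn v i j = 0 := by
  obtain ⟨h1, h2, h3⟩ := hr
  suffices H : ∀ k i j, i < n → j < n → (n-1-i) + (n-1-j) = k → E hn v i j = 0 by
    exact fun i j hi hj => H _ i j hi hj rfl
  intro k
  induction k using Nat.strong_induction_on with
  | _ k IH =>
    intro i j hi hj hk
    by_cases hi' : i = n - 1 <;> by_cases hj' : j = n - 1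
    · subst hi' hj'
      rw [Ebase hn v]
      rw [Finset.sum_congr rfl fun s hs => h3 s (by simp at hs; omega)]
      simp
    · -- i = n-1, j < n-1
      subst hi'
      have hj1 : j + 1 < n := by omega
      have h := Ecomb2 hn v j hj1
      have hE2 : E hn v (n-1) (j+1) = 0 :=
        IH ((n-1-(n-1)) + (n-1-(j+1))) (by omega) (n-1) (j+1) (by omega) hj1 rfl
      rw [hE2, h2 j hj1] at h
      linarith
    · -- j = n-1, i < n-1
      subst hj'
      have hi1 : i + 1 < n := by omega
      have h := Ecomb3 hn v i hi1
      have hE2 : E hn v (i+1) (n-1) = 0 :=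
        IH ((n-1-(i+1)) + (n-1-(n-1))) (by omega) (i+1) (n-1) hi1 (by omega) rfl
      rw [hE2, h3 i hi1] at h
      linarith
    · have hi1 : i + 1 < n := by omega
      have hj1 : j + 1 < n := by omega
      have h := Ecomb1 hn v i j hi1 hj1
      have e1 : E hn v i (j+1) = 0 :=
        IH ((n-1-i) + (n-1-(j+1))) (by omega) i (j+1) hi hj1 rfl
      have e2 : E hn v (i+1) j = 0 :=
        IH ((n-1-(i+1)) + (n-1-j)) (by omega) (i+1) j hi1 hj rfl
      have e3 : E hn v (i+1) (j+1) = 0 :=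
        IH ((n-1-(i+1)) + (n-1-(j+1))) (by omega) (i+1) (j+1) hi1 hj1 rfl
      have hu : U hn v i j = U hn v (i+1) (j+1) := h1 i j hi1 hj1
      rw [e1, e2, e3, hu] at h
      linarith

lemma mulVec_zero_of_rel (hn : 0 < n) (v : Fin (n ^ 2) → ℚ) (hr : Rel hn v) :
    ((Mz n).map ((↑) : ℤ → ℚ)).mulVec v = 0 := by
  funext b
  have hb1 : ((b:ℕ)) / n < n := by
    apply Nat.div_lt_of_lt_mul; simpa [pow_two] using b.2
  have hb2 : ((b:ℕ)) % n < n := Nat.mod_lt _ hn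
  have hb : b = idx hn ((b:ℕ)/n) ((b:ℕ)%n) := by
    ext
    rw [idx_val hn _ _ hb1 hb2, Nat.mul_comm]
    exact (Nat.div_add_mod _ n).symm
  rw [hb, E_eq hn v _ _ hb1 hb2]
  exact E_zero_of_rel hn v hr _ _ hb1 hb2


/-! ### The explicit parametrization of the solution space -/

def cc (hn : 0 < n) (c : Fin n → ℚ) (k : ℕ) : ℚ := c ⟨k % n, Nat.mod_lt _ hn⟩

lemma cc_eq (hn : 0 < n) (c : Fin n → ℚ) (k : ℕ) (hk : k < n) :
    cc hn c k = c ⟨k, hk⟩ := by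
  simp [cc, Nat.mod_eq_of_lt hk]

def gf (hn : 0 < n) (c : Fin n → ℚ) (i j : ℕ) : ℚ :=
  if i = j then - ∑ k ∈ range (n-2), cc hn c (k+1)
  else if j < i then cc hn c (i - j)
  else if j - i ≤ n-2 then cc hn c (n-1-(j-i))
  else cc hn c 0

def sig (hn : 0 < n) (c : Fin n → ℚ) : Fin (n ^ 2) → ℚ :=
  fun b => gf hn c ((b:ℕ)/n) ((b:ℕ)%n)

lemma U_sig (hn : 0 < n) (c : Fin n → ℚ) (i j : ℕ) (hi : i < n) (hj : j < n) :
    U hn (sig hn c) i j = gf hn c i j := by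
  simp only [U, sig, idx_div hn i j hi hj, idx_mod hn i j hi hj]

lemma gf_shift (hn : 0 < n) (c : Fin n → ℚ) (i j : ℕ) :
    gf hn c (i+1) (j+1) = gf hn c i j := by
  simp only [gf, Nat.succ_sub_succ, Nat.add_lt_add_iff_right, Nat.add_right_cancel_iff]

lemma gf_corner1 (hn : 0 < n) (c : Fin n → ℚ) (j : ℕ) (hj : j + 2 < n) :
    gf hn c 0 (j+1) = gf hn c (n-2) j := by
  have h1 : ¬ (0 = j + 1) := by omega
  have h2 : ¬ (j + 1 < 0) := by omega
  have h3 : j + 1 - 0 ≤ n - 2 := by omega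
  have h4 : ¬ (n - 2 = j) := by omega
  have h5 : j < n - 2 := by omega
  rw [gf, if_neg h1, if_neg h2, if_pos h3, gf, if_neg h4, if_pos h5]
  congr 1
  omega

lemma gf_corner2 (hn : 0 < n) (c : Fin n → ℚ) (i : ℕ) (hi : i + 2 < n) :
    gf hn c (i+1) 0 = gf hn c i (n-2) := by
  have h1 : ¬ (i + 1 = 0) := by omega
  have h2 : (0:ℕ) < i + 1 := by omega
  have h4 : ¬ (i = n - 2) := by omega
  have h5 : ¬ (n - 2 < i) := by omega
  have h6 : n - 2 - i ≤ n - 2 := by omega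
  rw [gf, if_neg h1, if_pos h2, gf, if_neg h4, if_neg h5, if_pos h6]
  congr 1
  omega

lemma gf_col0 (hn : 0 < n) (c : Fin n → ℚ) (s : ℕ) (hs : 0 < s) :
    gf hn c s 0 = cc hn c s := by
  have h1 : ¬ (s = 0) := by omega
  rw [gf, if_neg h1, if_pos hs]
  congr 1

lemma rel2_gf (hn2 : 2 ≤ n) (c : Fin n → ℚ) :
    ∀ j, j + 1 < n → ∑ s ∈ range (n-1), gf (by omega : 0 < n) c s j = 0 := by
  have hn : 0 < n := by omega
  intro j
  induction j with
  | zero =>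
    intro _
    have hsplit : range (n-1) = range ((n-2)+1) := by congr 1; omega
    rw [hsplit, Finset.sum_range_succ']
    have : ∀ k ∈ range (n-2), gf hn c (k+1) 0 = cc hn c (k+1) := by
      intro k _; exact gf_col0 hn c (k+1) (by omega)
    rw [Finset.sum_congr rfl this]
    have h00 : gf hn c 0 0 = - ∑ k ∈ range (n-2), cc hn c (k+1) := by
      rw [gf, if_pos rfl]
    rw [h00]; ring
  | succ j IH =>
    intro hj
    have IH' := IH (by omega)
    have hsplit : range (n-1) = range ((n-2)+1) := by congr 1; omega
    rw [hsplit, Finset.sum_range_succ']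
    have hshift : ∀ s ∈ range (n-2), gf hn c (s+1) (j+1) = gf hn c s j := by
      intro s _; exact gf_shift hn c s j
    rw [Finset.sum_congr rfl hshift]
    -- IH' : sum over range (n-1) of gf s j = 0; split off last term
    rw [hsplit, Finset.sum_range_succ] at IH'
    have hc : gf hn c 0 (j+1) = gf hn c (n-2) j := gf_corner1 hn c j (by omega)
    rw [hc]
    linarith

lemma rel3_gf (hn2 : 2 ≤ n) (c : Fin n → ℚ) :
    ∀ i, i + 1 < n → ∑ t ∈ range (n-1), gf (by omega : 0 < n) c i t = 0 := by
  have hn : 0 < n := by omega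
  intro i
  induction i with
  | zero =>
    intro _
    have hsplit : range (n-1) = range ((n-2)+1) := by congr 1; omega
    rw [hsplit, Finset.sum_range_succ']
    have h1 : ∀ t ∈ range (n-2), gf hn c 0 (t+1) = cc hn c (n-2-t) := by
      intro t ht
      simp only [mem_range] at ht
      have e1 : ¬ (0 = t+1) := by omega
      have e2 : ¬ (t+1 < 0) := by omega
      have e3 : t + 1 - 0 ≤ n - 2 := by omega
      rw [gf, if_neg e1, if_neg e2, if_pos e3]
      congr 1
      omega
    rw [Finset.sum_congr rfl h1]
    have h2 : ∑ t ∈ range (n-2), cc hn c (n-2-t) = ∑ k ∈ range (n-2), cc hn c (k+1) := by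
      have := Finset.sum_range_reflect (fun k => cc hn c (k+1)) (n-2)
      rw [← this]
      refine Finset.sum_congr rfl fun t ht => ?_
      simp only [mem_range] at ht
      congr 1
      omega
    rw [h2]
    have h00 : gf hn c 0 0 = - ∑ k ∈ range (n-2), cc hn c (k+1) := by
      rw [gf, if_pos rfl]
    rw [h00]; ring
  | succ i IH =>
    intro hi
    have IH' := IH (by omega)
    have hsplit : range (n-1) = range ((n-2)+1) := by congr 1; omega
    rw [hsplit, Finset.sum_range_succ']
    have hshift : ∀ t ∈ range (n-2), gf hn c (i+1) (t+1) = gf hn c i t := by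
      intro t _; exact gf_shift hn c i t
    rw [Finset.sum_congr rfl hshift]
    rw [hsplit, Finset.sum_range_succ] at IH'
    have hc : gf hn c (i+1) 0 = gf hn c i (n-2) := gf_corner2 hn c i (by omega)
    rw [hc]
    linarith

lemma rel_sig (hn2 : 2 ≤ n) (hn : 0 < n) (c : Fin n → ℚ) : Rel hn (sig hn c) := by
  refine ⟨fun i j hi hj => ?_, fun j hj => ?_, fun i hi => ?_⟩
  · rw [U_sig hn c i j (by omega) (by omega), U_sig hn c (i+1) (j+1) hi hj,
      gf_shift hn c i j]
  · have := rel2_gf hn2 c j hj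
    rw [← this]
    refine Finset.sum_congr rfl fun s hs => ?_
    simp only [mem_range] at hs
    exact U_sig hn c s j (by omega) (by omega)
  · have := rel3_gf hn2 c i hi
    rw [← this]
    refine Finset.sum_congr rfl fun t ht => ?_
    simp only [mem_range] at ht
    exact U_sig hn c i t (by omega) (by omega)


/-! ### Reconstruction: a vector satisfying the relations is determined by `n` coordinates -/

lemma sum_range_split' (m : ℕ) (hm : 0 < m) (f : ℕ → ℚ) :
    ∑ s ∈ range m, f s = ∑ s ∈ range (m-1), f (s+1) + f 0 := by
  obtain ⟨p, rfl⟩ : ∃ p, m = p + 1 := ⟨m - 1, by omega⟩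
  simp [Finset.sum_range_succ']

lemma sum_range_split (m : ℕ) (hm : 0 < m) (f : ℕ → ℚ) :
    ∑ s ∈ range m, f s = ∑ s ∈ range (m-1), f s + f (m-1) := by
  obtain ⟨p, rfl⟩ : ∃ p, m = p + 1 := ⟨m - 1, by omega⟩
  simp [Finset.sum_range_succ]

section Recon

variable (hn : 0 < n) (v : Fin (n ^ 2) → ℚ)

lemma U_shift (hr : Rel hn v) :
    ∀ m i j, i + m < n → j + m < n → U hn v (i+m) (j+m) = U hn v i j := by
  intro m
  induction m with
  | zero => intro i j _ _; rfl
  | succ m IH =>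
    intro i j hi hj
    have h1 := hr.1 (i+m) (j+m) (by omega) (by omega)
    have h2 := IH i j (by omega) (by omega)
    calc U hn v (i+(m+1)) (j+(m+1)) = U hn v ((i+m)+1) ((j+m)+1) := by ring_nf
      _ = U hn v (i+m) (j+m) := (h1).symm
      _ = U hn v i j := h2

lemma U_lower (hr : Rel hn v) (i j : ℕ) (hi : i < n) (hj : j ≤ i) :
    U hn v i j = U hn v (i-j) 0 := by
  have := U_shift hn v hr j (i-j) 0 (by omega) (by omega)
  rw [← this]
  congr 1 <;> omega

lemma U_upper (hr : Rel hn v) (i j : ℕ) (hj : j < n) (hi : i ≤ j) :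
    U hn v i j = U hn v 0 (j-i) := by
  have := U_shift hn v hr i 0 (j-i) (by omega) (by omega)
  rw [← this]
  congr 1 <;> omega

lemma U_top_bottom (hn2 : 2 ≤ n) (hr : Rel hn v) (c : ℕ) (hc1 : 1 ≤ c) (hc2 : c ≤ n-2) :
    U hn v 0 c = U hn v (n-1) c := by
  have hA : ∑ s ∈ range (n-1), U hn v s (c-1) = 0 := hr.2.1 (c-1) (by omega)
  have hB : ∑ s ∈ range (n-1), U hn v s c = 0 := hr.2.1 c (by omega)
  have hshift : ∀ s ∈ range (n-1), U hn v s (c-1) = U hn v (s+1) c := by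
    intro s hs
    simp only [mem_range] at hs
    have := hr.1 s (c-1) (by omega) (by omega)
    rw [this]
    congr 1
    omega
  rw [Finset.sum_congr rfl hshift] at hA
  -- hA : ∑ s in range (n-1), U (s+1) c = 0
  have e1 := sum_range_split' n (by omega) (fun s => U hn v s c)
  have e2 := sum_range_split n (by omega) (fun s => U hn v s c)
  rw [hA, hB] at *
  rw [e1] at e2
  linarith [e2]

lemma U_00 (hn2 : 2 ≤ n) (hr : Rel hn v) :
    U hn v 0 0 = - ∑ k ∈ range (n-2), U hn v (k+1) 0 := by
  have h := hr.2.1 0 (by omega)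
  have hsplit : range (n-1) = range ((n-2)+1) := by congr 1; omega
  rw [hsplit, Finset.sum_range_succ'] at h
  linarith

lemma recon (hn2 : 2 ≤ n) (hr : Rel hn v) :
    v = sig hn (fun k => if (k:ℕ) = 0 then U hn v 0 (n-1) else U hn v (k:ℕ) 0) := by
  set c : Fin n → ℚ := fun k => if (k:ℕ) = 0 then U hn v 0 (n-1) else U hn v (k:ℕ) 0 with hc
  have hcc : ∀ k : ℕ, k < n → cc hn c k = if k = 0 then U hn v 0 (n-1) else U hn v k 0 := by
    intro k hk
    rw [cc_eq hn c k hk, hc]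
  funext b
  have hb1 : ((b:ℕ)) / n < n := by
    apply Nat.div_lt_of_lt_mul; simpa [pow_two] using b.2
  have hb2 : ((b:ℕ)) % n < n := Nat.mod_lt _ hn
  have hb : b = idx hn ((b:ℕ)/n) ((b:ℕ)%n) := by
    ext
    rw [idx_val hn _ _ hb1 hb2, Nat.mul_comm]
    exact (Nat.div_add_mod _ n).symm
  have goal2 : ∀ i j, i < n → j < n → U hn v i j = gf hn c i j := by
    intro i j hi hj
    rcases lt_trichotomy i j with hij | hij | hij
    · -- i < j
      have e1 : ¬ (i = j) := by omega
      have e2 : ¬ (j < i) := by omega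
      rw [gf, if_neg e1, if_neg e2]
      by_cases h3 : j - i ≤ n - 2
      · rw [if_pos h3]
        have k1 : 1 ≤ j - i := by omega
        have hcase : cc hn c (n-1-(j-i)) = U hn v (n-1-(j-i)) 0 := by
          rw [hcc _ (by omega), if_neg (by omega)]
        rw [hcase]
        rw [← U_lower hn v hr (n-1) (j-i) (by omega) (by omega)]
        rw [← U_top_bottom hn v hn2 hr (j-i) k1 h3]
        exact U_upper hn v hr i j hj (by omega)
      · rw [if_neg h3]
        have hj1 : j - i = n - 1 := by omega
        have hi0 : i = 0 := by omega
        have hjn : j = n - 1 := by omega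
        rw [hcc 0 (by omega), if_pos rfl, hi0, hjn]
    · -- i = j
      subst hij
      rw [gf, if_pos rfl]
      have hterm : ∀ k ∈ range (n-2), cc hn c (k+1) = U hn v (k+1) 0 := by
        intro k hk
        simp only [mem_range] at hk
        rw [hcc (k+1) (by omega), if_neg (by omega)]
      rw [Finset.sum_congr rfl hterm, ← U_00 hn v hn2 hr]
      have := U_shift hn v hr i 0 0 (by omega) (by omega)
      simpa using this
    · -- j < i
      have e1 : ¬ (i = j) := by omega
      rw [gf, if_neg e1, if_pos hij]
      rw [hcc (i-j) (by omega), if_neg (by omega)]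
      exact U_lower hn v hr i j hi (by omega)
  calc v b = U hn v ((b:ℕ)/n) ((b:ℕ)%n) := by conv_lhs => rw [hb, show v (idx hn ((b:ℕ)/n) ((b:ℕ)%n)) = U hn v ((b:ℕ)/n) ((b:ℕ)%n) from rfl]
    _ = gf hn c ((b:ℕ)/n) ((b:ℕ)%n) := goal2 _ _ hb1 hb2
    _ = sig hn c b := rfl

end Recon


/-! ### Linear maps -/

lemma gf_add (hn : 0 < n) (c c' : Fin n → ℚ) (i j : ℕ) :
    gf hn (c + c') i j = gf hn c i j + gf hn c' i j := by
  have hcc : ∀ k, cc hn (c + c') k = cc hn c k + cc hn c' k := fun k => rfl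
  simp only [gf, hcc]
  split_ifs <;> simp [Finset.sum_add_distrib] <;> ring

lemma gf_smul (hn : 0 < n) (a : ℚ) (c : Fin n → ℚ) (i j : ℕ) :
    gf hn (a • c) i j = a * gf hn c i j := by
  have hcc : ∀ k, cc hn (a • c) k = a * cc hn c k := fun k => rfl
  simp only [gf, hcc]
  split_ifs <;> simp [Finset.mul_sum] <;> ring

def sigL (hn : 0 < n) : (Fin n → ℚ) →ₗ[ℚ] (Fin (n ^ 2) → ℚ) where
  toFun := sig hn
  map_add' c c' := by funext b; exact gf_add hn c c' _ _
  map_smul' a c := by funext b; exact gf_smul hn a c _ _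

def piL (hn : 0 < n) : (Fin (n ^ 2) → ℚ) →ₗ[ℚ] (Fin n → ℚ) where
  toFun v := fun k => if (k:ℕ) = 0 then v (idx hn 0 (n-1)) else v (idx hn (k:ℕ) 0)
  map_add' v w := by funext k; by_cases h : (k:ℕ) = 0 <;> simp [h]
  map_smul' a v := by funext k; by_cases h : (k:ℕ) = 0 <;> simp [h]

lemma pi_sig (hn2 : 2 ≤ n) (hn : 0 < n) (c : Fin n → ℚ) : piL hn (sigL hn c) = c := by
  funext k
  show (if (k:ℕ) = 0 then sig hn c (idx hn 0 (n-1)) else sig hn c (idx hn (k:ℕ) 0)) = c k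
  by_cases h : (k:ℕ) = 0
  · rw [if_pos h]
    show gf hn c ((idx hn 0 (n-1) : ℕ)/n) ((idx hn 0 (n-1) : ℕ)%n) = c k
    rw [idx_div hn 0 (n-1) (by omega) (by omega), idx_mod hn 0 (n-1) (by omega) (by omega)]
    have e1 : ¬ ((0:ℕ) = n-1) := by omega
    have e2 : ¬ (n-1 < 0) := by omega
    have e3 : ¬ (n-1-0 ≤ n-2) := by omega
    rw [gf, if_neg e1, if_neg e2, if_neg e3, cc_eq hn c 0 (by omega)]
    congr 1
    exact (Fin.ext h.symm : (⟨0, by omega⟩ : Fin n) = k)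
  · rw [if_neg h]
    show gf hn c ((idx hn (k:ℕ) 0 : ℕ)/n) ((idx hn (k:ℕ) 0 : ℕ)%n) = c k
    rw [idx_div hn (k:ℕ) 0 k.2 (by omega), idx_mod hn (k:ℕ) 0 k.2 (by omega)]
    rw [gf_col0 hn c (k:ℕ) (by omega), cc_eq hn c (k:ℕ) k.2]
  
lemma recon' (hn2 : 2 ≤ n) (hn : 0 < n) (v : Fin (n ^ 2) → ℚ) (hr : Rel hn v) :
    v = sigL hn (piL hn v) :=
  recon hn v hn2 hr

end Stmt5

theorem stmt5 (n : ℕ) (hn : 2 ≤ n) :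
    ((Mz n).map ((↑) : ℤ → ℚ)).rank = n ^ 2 - n := by
  have hn0 : 0 < n := by omega
  set A := (Mz n).map ((↑) : ℤ → ℚ) with hA
  have hker : ∀ v, A.mulVecLin v = 0 ↔ Stmt5.Rel hn0 v := by
    intro v
    rw [Matrix.mulVecLin_apply]
    exact ⟨Stmt5.rel_of_mulVec hn0 v, Stmt5.mulVec_zero_of_rel hn0 v⟩
  have hle : Module.finrank ℚ (LinearMap.ker A.mulVecLin) ≤ n := by
    have hinj : Function.Injective
        ((Stmt5.piL hn0).comp (LinearMap.ker A.mulVecLin).subtype) := by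
      rw [← LinearMap.ker_eq_bot, LinearMap.ker_eq_bot']
      intro x hx
      have hx' : Stmt5.piL hn0 (x : Fin (n ^ 2) → ℚ) = 0 := hx
      have hrel : Stmt5.Rel hn0 (x : Fin (n ^ 2) → ℚ) := (hker _).mp x.2
      have := Stmt5.recon' hn hn0 _ hrel
      rw [hx', map_zero] at this
      exact Subtype.ext this
    have := LinearMap.finrank_le_finrank_of_injective hinj
    simpa [Module.finrank_fintype_fun_eq_card] using this
  have hge : n ≤ Module.finrank ℚ (LinearMap.ker A.mulVecLin) := by
    have hmem : ∀ c : Fin n → ℚ, Stmt5.sigL hn0 c ∈ LinearMap.ker A.mulVecLin := by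
      intro c
      rw [LinearMap.mem_ker]
      exact (hker _).mpr (Stmt5.rel_sig hn hn0 c)
    have hinj : Function.Injective
        ((Stmt5.sigL hn0).codRestrict (LinearMap.ker A.mulVecLin) hmem) := by
      rw [← LinearMap.ker_eq_bot, LinearMap.ker_eq_bot']
      intro c hc
      have hc' : Stmt5.sigL hn0 c = 0 := by
        have := congrArg (Subtype.val) hc
        exact this
      have := Stmt5.pi_sig hn hn0 c
      rw [hc', map_zero] at this
      exact this.symm
    have := LinearMap.finrank_le_finrank_of_injective hinj
    simpa [Module.finrank_fintype_fun_eq_card] using this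
  have hkn : Module.finrank ℚ (LinearMap.ker A.mulVecLin) = n := le_antisymm hle hge
  have hrn := LinearMap.finrank_range_add_finrank_ker A.mulVecLin
  have hdom : Module.finrank ℚ (Fin (n ^ 2) → ℚ) = n ^ 2 := by
    simp [Module.finrank_fintype_fun_eq_card]
  have hrank : A.rank = Module.finrank ℚ (LinearMap.range A.mulVecLin) := rfl
  rw [hkn, hdom] at hrn
  omega
end
end

section
/- Let 1 ≤ r ≤ n and let I be the ideal of ℂ[z_{i,j} : 1 ≤ i,j ≤ n] generated by all r×r minors of the matrix (z_{i,j}) (the determinants of all r×r submatrices). Then I is a Poisson ideal for the standard Poisson bracket: for every polynomial f ∈ ℂ[z_{i,j}] and every g ∈ I, the bracket {f, g} lies in I. -/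
open MvPolynomial

noncomputable section

/-- The set of `r × r` minors of the matrix of variables `(z_{i,j})`: determinants of the
submatrices with rows indexed by an `r`-element subset and columns by an `r`-element subset
of `{1,…,n}` (given by strictly increasing index maps). -/
def minorsSet (n r : ℕ) : Set (MvPolynomial (Fin n × Fin n) ℂ) :=
  {d | ∃ σ τ : Fin r → Fin n, StrictMono σ ∧ StrictMono τ ∧
    d = ((Matrix.of fun a b : Fin n => X (a, b)).submatrix σ τ).det}

namespace Stmt19Aux

/-- comparison sign as a complex number -/
def sc {n : ℕ} (x y : Fin n) : ℂ := if x < y then 1 else if y < x then -1 else 0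

variable {n : ℕ}
variable (B : MvPolynomial (Fin n × Fin n) ℂ →ₗ[ℂ] MvPolynomial (Fin n × Fin n) ℂ →ₗ[ℂ]
      MvPolynomial (Fin n × Fin n) ℂ)

theorem B_one_right (hleibR : ∀ f g h, B f (g * h) = B f g * h + g * B f h)
    (f : MvPolynomial (Fin n × Fin n) ℂ) : B f 1 = 0 := by
  have h := hleibR f 1 1
  rw [mul_one, mul_one, one_mul] at h
  exact (add_eq_left.mp h.symm)

theorem B_one_left (hleibL : ∀ f g h, B (f * g) h = B f h * g + f * B g h)
    (f : MvPolynomial (Fin n × Fin n) ℂ) : B 1 f = 0 := by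
  have h := hleibL 1 1 f
  rw [mul_one, mul_one, one_mul] at h
  exact (add_eq_left.mp h.symm)

theorem B_int_right (hleibR : ∀ f g h, B f (g * h) = B f g * h + g * B f h)
    (f : MvPolynomial (Fin n × Fin n) ℂ) (m : ℤ) :
    B f ((m : ℤ) : MvPolynomial (Fin n × Fin n) ℂ) = 0 := by
  have hcast : ((m : ℤ) : MvPolynomial (Fin n × Fin n) ℂ)
      = ((m : ℂ)) • (1 : MvPolynomial (Fin n × Fin n) ℂ) := by
    rw [← map_intCast (C : ℂ →+* MvPolynomial (Fin n × Fin n) ℂ) m,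
      MvPolynomial.smul_eq_C_mul, mul_one]
  rw [hcast, map_smul, B_one_right B hleibR, smul_zero]

theorem B_self (hanti : ∀ f g, B f g = -B g f)
    (f : MvPolynomial (Fin n × Fin n) ℂ) : B f f = 0 := by
  have h := hanti f f
  have h2 : (2 : ℂ) • B f f = 0 := by
    rw [two_smul]
    nth_rewrite 2 [h]
    exact add_neg_cancel _
  rcases smul_eq_zero.mp h2 with h3 | h3
  · exact absurd h3 two_ne_zero
  · exact h3

/-- Bracket of a variable with a variable. -/
theorem keyX (hanti : ∀ f g, B f g = -B g f)
    (h1 : ∀ i j k : Fin n, j < k → B (X (i, j)) (X (i, k)) = X (i, k) * X (i, j))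
    (h2 : ∀ i j k : Fin n, i < k → B (X (i, j)) (X (k, j)) = X (k, j) * X (i, j))
    (h3 : ∀ i j s t : Fin n, i < s → t < j → B (X (i, j)) (X (s, t)) = 0)
    (h4 : ∀ i j s t : Fin n, i < s → j < t →
      B (X (i, j)) (X (s, t)) = 2 * (X (s, t) * X (i, j)))
    (p q : Fin n × Fin n) :
    B (X p) (X q) = (sc p.1 q.1 + sc p.2 q.2) • (X q * X p) := by
  obtain ⟨a, b⟩ := p
  obtain ⟨s, t⟩ := q
  simp only [sc]
  rcases lt_trichotomy a s with hr | hr | hr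
  · rcases lt_trichotomy b t with hc | hc | hc
    · rw [h4 a b s t hr hc]
      rw [if_pos hr, if_pos hc]
      simp only [add_smul, neg_smul, one_smul, zero_smul, zero_add, add_zero]
      try ring
    · subst hc
      rw [h2 a b s hr, if_pos hr, if_neg (lt_irrefl b), if_neg (lt_irrefl b)]
      simp only [add_smul, neg_smul, one_smul, zero_smul, zero_add, add_zero]
      try ring
    · rw [h3 a b s t hr hc, if_pos hr, if_neg (not_lt.mpr hc.le), if_pos hc]
      simp only [add_smul, neg_smul, one_smul, zero_smul, zero_add, add_zero]
      try ring
  · subst hr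
    rcases lt_trichotomy b t with hc | hc | hc
    · rw [h1 a b t hc, if_neg (lt_irrefl a), if_neg (lt_irrefl a), if_pos hc]
      simp only [add_smul, neg_smul, one_smul, zero_smul, zero_add, add_zero]
      try ring
    · subst hc
      rw [B_self B hanti]
      simp
    · rw [hanti, h1 a t b hc, if_neg (lt_irrefl a), if_neg (lt_irrefl a),
        if_neg (not_lt.mpr hc.le), if_pos hc]
      simp only [add_smul, neg_smul, one_smul, zero_smul, zero_add, add_zero]
      try ring
  · rcases lt_trichotomy b t with hc | hc | hc
    · rw [hanti, h3 s t a b hr hc, if_neg (not_lt.mpr hr.le), if_pos hr, if_pos hc]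
      simp only [add_smul, neg_smul, one_smul, zero_smul, zero_add, add_zero]
      try ring
    · subst hc
      rw [hanti, h2 s b a hr, if_neg (not_lt.mpr hr.le), if_pos hr,
        if_neg (lt_irrefl b), if_neg (lt_irrefl b)]
      simp only [add_smul, neg_smul, one_smul, zero_smul, zero_add, add_zero]
      try ring
    · rw [hanti, h4 s t a b hr hc, if_neg (not_lt.mpr hr.le), if_pos hr,
        if_neg (not_lt.mpr hc.le), if_pos hc]
      simp only [add_smul, neg_smul, one_smul, zero_smul, zero_add, add_zero]
      try ring

/-- Leibniz rule for finite products. -/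
theorem B_prod (hleibR : ∀ f g h, B f (g * h) = B f g * h + g * B f h)
    (f : MvPolynomial (Fin n × Fin n) ℂ) {ι : Type*} [DecidableEq ι]
    (s : Finset ι) (g : ι → MvPolynomial (Fin n × Fin n) ℂ) :
    B f (∏ k ∈ s, g k) = ∑ k ∈ s, (∏ l ∈ s.erase k, g l) * B f (g k) := by
  induction s using Finset.induction_on with
  | empty => simp [B_one_right B hleibR]
  | @insert a s ha ih =>
    rw [Finset.prod_insert ha, hleibR, ih, Finset.sum_insert ha, Finset.erase_insert ha,
      Finset.mul_sum]
    congr 1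
    · ring
    · refine Finset.sum_congr rfl fun k hk => ?_
      rw [Finset.erase_insert_of_ne (Ne.symm (show k ≠ a from fun h => ha (h ▸ hk))),
        Finset.prod_insert (fun h => ha (Finset.mem_of_mem_erase h))]
      ring

end Stmt19Aux

open Stmt19Aux in
theorem stmt19 (n r : ℕ) (hr1 : 1 ≤ r) (hrn : r ≤ n)
    (B : MvPolynomial (Fin n × Fin n) ℂ →ₗ[ℂ] MvPolynomial (Fin n × Fin n) ℂ →ₗ[ℂ]
      MvPolynomial (Fin n × Fin n) ℂ)
    (hanti : ∀ f g, B f g = -B g f)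
    (hleibR : ∀ f g h, B f (g * h) = B f g * h + g * B f h)
    (hleibL : ∀ f g h, B (f * g) h = B f h * g + f * B g h)
    (h1 : ∀ i j k : Fin n, j < k → B (X (i, j)) (X (i, k)) = X (i, k) * X (i, j))
    (h2 : ∀ i j k : Fin n, i < k → B (X (i, j)) (X (k, j)) = X (k, j) * X (i, j))
    (h3 : ∀ i j s t : Fin n, i < s → t < j → B (X (i, j)) (X (s, t)) = 0)
    (h4 : ∀ i j s t : Fin n, i < s → j < t →
      B (X (i, j)) (X (s, t)) = 2 * (X (s, t) * X (i, j))) :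
    ∀ f g : MvPolynomial (Fin n × Fin n) ℂ,
      g ∈ Ideal.span (minorsSet n r) → B f g ∈ Ideal.span (minorsSet n r) := by
  set I := Ideal.span (minorsSet n r) with hI
  -- Bracket of a variable with a minor: a scalar multiple of (variable * minor).
  have keyMinor : ∀ (p : Fin n × Fin n) (σ τ : Fin r → Fin n),
      B (X p) (((Matrix.of fun a b : Fin n => X (a, b)).submatrix σ τ).det) =
      ((∑ i, sc p.1 (σ i)) + ∑ i, sc p.2 (τ i)) •
        (X p * ((Matrix.of fun a b : Fin n => X (a, b)).submatrix σ τ).det) := by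
    intro p σ τ
    rw [Matrix.det_apply']
    rw [map_sum, Finset.mul_sum, Finset.smul_sum]
    refine Finset.sum_congr rfl fun π _ => ?_
    have hM : ∀ i : Fin r,
        ((Matrix.of fun a b : Fin n => X (a, b)).submatrix σ τ) (π i) i
          = (X (σ (π i), τ i) : MvPolynomial (Fin n × Fin n) ℂ) := fun i => rfl
    have hε : B (X p) (((Equiv.Perm.sign π : ℤ) : MvPolynomial (Fin n × Fin n) ℂ)) = 0 :=
      B_int_right B hleibR _ _
    rw [hleibR, hε, zero_mul, zero_add]
    rw [B_prod B hleibR]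
    have hterm : ∀ i : Fin r,
        (∏ l ∈ Finset.univ.erase i,
            ((Matrix.of fun a b : Fin n => X (a, b)).submatrix σ τ) (π l) l) *
          B (X p) (((Matrix.of fun a b : Fin n => X (a, b)).submatrix σ τ) (π i) i)
        = (sc p.1 (σ (π i)) + sc p.2 (τ i)) •
          (X p * ∏ l, ((Matrix.of fun a b : Fin n => X (a, b)).submatrix σ τ) (π l) l) := by
      intro i
      rw [hM i, keyX B hanti h1 h2 h3 h4 p (σ (π i), τ i)]
      rw [mul_smul_comm]
      congr 1
      rw [← Finset.prod_erase_mul Finset.univ _ (Finset.mem_univ i)]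
      rw [hM i]
      ring
    rw [Finset.sum_congr rfl fun i _ => hterm i]
    rw [← Finset.sum_smul]
    have hsum : (∑ i, (sc p.1 (σ (π i)) + sc p.2 (τ i)))
        = (∑ i, sc p.1 (σ i)) + ∑ i, sc p.2 (τ i) := by
      rw [Finset.sum_add_distrib]
      congr 1
      exact Equiv.sum_comp π (fun i => sc p.1 (σ i))
    rw [hsum, mul_smul_comm]
    congr 1
    ring
  -- Bracket of a variable with an element of `minorsSet` lies in `I`.
  have hXd : ∀ (p : Fin n × Fin n), ∀ d ∈ minorsSet n r, B (X p) d ∈ I := by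
    rintro p d ⟨σ, τ, hσ, hτ, rfl⟩
    rw [keyMinor p σ τ, MvPolynomial.smul_eq_C_mul]
    exact Ideal.mul_mem_left _ _ (Ideal.mul_mem_left _ _
      (Ideal.subset_span ⟨σ, τ, hσ, hτ, rfl⟩))
  -- Bracket of anything with an element of `minorsSet` lies in `I`.
  have hfd : ∀ (f : MvPolynomial (Fin n × Fin n) ℂ), ∀ d ∈ minorsSet n r, B f d ∈ I := by
    intro f d hd
    induction f using MvPolynomial.induction_on with
    | C a =>
      have : (C a : MvPolynomial (Fin n × Fin n) ℂ) = a • 1 := by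
        rw [MvPolynomial.smul_eq_C_mul, mul_one]
      rw [this, map_smul, LinearMap.smul_apply, B_one_left B hleibL, smul_zero]
      exact zero_mem I
    | add f g hf hg =>
      rw [map_add, LinearMap.add_apply]
      exact add_mem hf hg
    | mul_X f q hf =>
      rw [hleibL]
      exact add_mem (Ideal.mul_mem_right _ _ hf) (Ideal.mul_mem_left _ _ (hXd q d hd))
  -- Main induction over the span.
  intro f g hg
  have main : ∀ g, g ∈ I → (g ∈ I ∧ ∀ f', B f' g ∈ I) := by
    intro g hg
    refine Submodule.span_induction (p := fun x _ => x ∈ I ∧ ∀ f', B f' x ∈ I)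
      ?_ ?_ ?_ ?_ hg
    · exact fun x hx => ⟨Ideal.subset_span hx, fun f' => hfd f' x hx⟩
    · exact ⟨zero_mem I, fun f' => by rw [map_zero]; exact zero_mem I⟩
    · intro x y hx hy ihx ihy
      exact ⟨add_mem ihx.1 ihy.1, fun f' => by rw [map_add]; exact add_mem (ihx.2 f') (ihy.2 f')⟩
    · intro a x hx ihx
      constructor
      · rw [smul_eq_mul]
        exact Ideal.mul_mem_left _ _ ihx.1
      · intro f'
        rw [smul_eq_mul, hleibR]
        exact add_mem (Ideal.mul_mem_left _ _ ihx.1) (Ideal.mul_mem_left _ _ (ihx.2 f'))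
  exact (main g hg).2 f
end
end
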